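/- For fixed y ∈ E, a symmetric Green's function depends on x − y only up to its leading (m − v_p(y)) p-adic digits: if k ≥ 1, G is a symmetric Green's function on E_k, y ∈ E, u ∈ 1 + p^{m − v_p(y)} ℤ_p, and x ∈ E, then x' := y + u(x − y) lies in E and G(x', y) = G(x, y). -/

import Mathlib

open MeasureTheory

noncomputable section

/-- The fundamental domain `E = ⋃_{s=0}^{m-1} p^s ℤ_p^×` of the Tate curve
`ℚ_p^×/p^{mℤ}`, described as the set of `x` with `p^{-(m-1)} ≤ |x| ≤ 1`
(such an `x` is automatically nonzero). -/
def Efund (p m : ℕ) [Fact p.Prime] : Set ℚ_[p] :=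
  {x | (p : ℝ) ^ (1 - (m : ℤ)) ≤ ‖x‖ ∧ ‖x‖ ≤ 1}

/-- The operator `(Dφ)(x) = |x| ∫_E (φ(z) − φ(x))/|z − x|² dμ⁺(z)`. -/
def Dop (p m : ℕ) [Fact p.Prime] [MeasurableSpace ℚ_[p]]
    (μ : Measure ℚ_[p]) (φ : ℚ_[p] → ℝ) (x : ℚ_[p]) : ℝ :=
  ‖x‖ * ∫ z in Efund p m, (φ z - φ x) / ‖z - x‖ ^ 2 ∂μ

/-- The multiplicative measure `dμ× = dμ⁺/|x|`. -/
def mulMeasure (p : ℕ) [Fact p.Prime] [MeasurableSpace ℚ_[p]]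
    (μ : Measure ℚ_[p]) : Measure ℚ_[p] :=
  μ.withDensity fun x => ENNReal.ofReal (1 / ‖x‖)

/-- `f` is locally constant on `E`: every point of `E` has a neighborhood in `E`
on which `f` is constant. -/
def LocConstOn (p m : ℕ) [Fact p.Prime] (f : ℚ_[p] → ℝ) : Prop :=
  ∀ x ∈ Efund p m, ∃ n : ℕ,
    ∀ y ∈ Efund p m, ‖y - x‖ ≤ (p : ℝ) ^ (-(n : ℤ)) → f y = f x

/-- `f : E → ℝ` has conductor `k`: `f(xu) = f(x)` for all `x ∈ E` and all
`u ∈ 1 + p^k ℤ_p` (note `xu ∈ E`). -/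
def HasConductor (p m : ℕ) [Fact p.Prime] (k : ℕ) (f : ℚ_[p] → ℝ) : Prop :=
  ∀ x ∈ Efund p m, ∀ u : ℚ_[p], ‖u - 1‖ ≤ (p : ℝ) ^ (-(k : ℤ)) → f (x * u) = f x

/-- A Green's function on the finite quotient `E_k`: a function `G : E × E → ℝ` of
conductor `k` in each variable such that for all `x, y ∈ E`,
`(D G(·,y))(x) = p^k · 𝟙[x/y ∈ 1 + p^k ℤ_p] − 1/V` where `V = m (1 − 1/p)`. -/
def IsGreen (p m : ℕ) [Fact p.Prime] [MeasurableSpace ℚ_[p]]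
    (μ : Measure ℚ_[p]) (k : ℕ) (G : ℚ_[p] → ℚ_[p] → ℝ) : Prop :=
  (∀ y ∈ Efund p m, HasConductor p m k (fun x => G x y)) ∧
  (∀ x ∈ Efund p m, HasConductor p m k (fun y => G x y)) ∧
  ∀ x ∈ Efund p m, ∀ y ∈ Efund p m,
    Dop p m μ (fun z => G z y) x =
      (if ‖x / y - 1‖ ≤ (p : ℝ) ^ (-(k : ℤ)) then (p : ℝ) ^ k else 0)
        - 1 / ((m : ℝ) * (1 - 1 / (p : ℝ)))

/-- `G` is symmetric on `E × E`. -/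
def IsSymmG (p m : ℕ) [Fact p.Prime] (G : ℚ_[p] → ℚ_[p] → ℝ) : Prop :=
  ∀ x ∈ Efund p m, ∀ y ∈ Efund p m, G x y = G y x

/-!
The homothety `σ z = y + u (z - y)` with centre `y ∈ E` and ratio `u ≡ 1 mod p^(m - v_p(y))`
moves each `z ∈ E` by `|1 - u| |y - z| < |z|`, so it preserves `|z|` and maps `E` onto itself;
since `|u| = 1` it is an isometry preserving Haar measure, and it preserves `|z / y - 1|`. Hence
`G (σ ·, y)` has conductor `k` and satisfies the same equation as `G (·, y)`, so their difference
`H` satisfies `D H = 0` on `E`. At a maximum `x₀` of `H` on the compact set `E`, `D H (x₀)` is the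
integral of a nonpositive function, so `H = H x₀` almost everywhere on `E`, hence everywhere by
local constancy; and `H y = 0` because `σ y = y`.
-/

open AffineMap (homothety)
open scoped Topology

theorem ContinuousAddEquiv.map_addHaar_eq_self_of_preimage_eq {G : Type*} [AddCommGroup G]
    [TopologicalSpace G] [IsTopologicalAddGroup G] [LocallyCompactSpace G]
    [SecondCountableTopology G] [MeasurableSpace G] [BorelSpace G]
    (μ : Measure G) [μ.IsAddHaarMeasure] (e : G ≃ₜ+ G) {s : Set G} (hs : IsCompact s)
    (hs_int : (interior s).Nonempty) (hs_meas : MeasurableSet s) (hes : e ⁻¹' s = s) :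
    μ.map e = μ := by
  set c := (μ.map e).addHaarScalarFactor μ
  have hc : μ.map e = c • μ := Measure.isAddLeftInvariant_eq_smul _ _
  have hcs : (c : ENNReal) * μ s = 1 * μ s := by
    rw [one_mul, ← Measure.coe_nnreal_smul_apply, ← hc,
      Measure.map_apply (map_continuous e).measurable hs_meas, hes]
  have hc1 : (c : ENNReal) = 1 :=
    (ENNReal.mul_left_inj (Measure.measure_pos_of_nonempty_interior μ hs_int).ne'
      hs.measure_lt_top.ne).mp hcs
  rw [hc, ENNReal.coe_eq_one.mp hc1, one_smul]

theorem homothety_sub_homothety {R : Type*} [CommRing R] (y u a b : R) :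
    homothety y u a - homothety y u b = u * (a - b) := by
  simp only [AffineMap.homothety_apply, vsub_eq_sub, vadd_eq_add, smul_eq_mul]
  ring

theorem isometry_homothety {𝕜 : Type*} [NormedField 𝕜] {u : 𝕜} (hu : ‖u‖ = 1) (y : 𝕜) :
    Isometry (homothety y u) :=
  Isometry.of_dist_eq fun a b => by
    rw [dist_eq_norm, dist_eq_norm, homothety_sub_homothety, norm_mul, hu, one_mul]

variable {p : ℕ} [Fact p.Prime]

theorem Padic.mul_norm_le_zpow_of_le_zpow_neg_sub_valuation {a : ℝ} {y : ℚ_[p]} (hy : y ≠ 0) {n : ℤ}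
    (ha : a ≤ (p : ℝ) ^ (-(n - y.valuation))) : a * ‖y‖ ≤ (p : ℝ) ^ (-n) := by
  have hp : (p : ℝ) ≠ 0 := Nat.cast_ne_zero.mpr (Fact.out : p.Prime).ne_zero
  calc a * ‖y‖ ≤ (p : ℝ) ^ (-(n - y.valuation)) * (p : ℝ) ^ (-y.valuation) := by
        rw [Padic.norm_eq_zpow_neg_valuation hy]
        exact mul_le_mul_of_nonneg_right ha (zpow_nonneg (Nat.cast_nonneg p) _)
    _ = (p : ℝ) ^ (-n) := by rw [← zpow_add₀ hp]; ring_nf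

section Haar

variable [MeasurableSpace ℚ_[p]] [BorelSpace ℚ_[p]] (μ : Measure ℚ_[p]) [μ.IsAddHaarMeasure]
  {u : ℚ_[p]}

theorem Padic.measurePreserving_mul_right_of_norm_eq_one (hu : ‖u‖ = 1) :
    MeasurePreserving (· * u) μ μ := by
  have hu0 : u ≠ 0 := norm_ne_zero_iff.mp (by rw [hu]; exact one_ne_zero)
  let e := (ContinuousLinearEquiv.unitsEquivAut ℚ_[p] (Units.mk0 u hu0)).toContinuousAddEquiv
  have he : ⇑e = (· * u) := rfl
  refine ⟨(continuous_mul_const u).measurable, he ▸ ?_⟩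
  refine e.map_addHaar_eq_self_of_preimage_eq μ (isCompact_closedBall 0 1)
    ⟨0, Metric.ball_subset_interior_closedBall (Metric.mem_ball_self one_pos)⟩
    measurableSet_closedBall ?_
  ext z
  simp [he, hu]

theorem Padic.measurePreserving_homothety (hu : ‖u‖ = 1) (y : ℚ_[p]) :
    MeasurePreserving (homothety y u) μ μ := by
  have h := (measurePreserving_add_right μ y).comp
    ((measurePreserving_mul_right_of_norm_eq_one μ hu).comp (measurePreserving_sub_right μ y))
  convert h using 1
  ext z
  simp [AffineMap.homothety_apply, mul_comm]

end Haar

section Efund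

variable {m : ℕ} {x z : ℚ_[p]}

theorem norm_pos_of_mem_Efund (hx : x ∈ Efund p m) : 0 < ‖x‖ :=
  (zpow_pos (Nat.cast_pos.mpr (Fact.out : p.Prime).pos) _).trans_le hx.1

theorem ne_zero_of_mem_Efund (hx : x ∈ Efund p m) : x ≠ 0 :=
  norm_pos_iff.mp (norm_pos_of_mem_Efund hx)

theorem mem_Efund_of_norm_eq (hx : x ∈ Efund p m) (h : ‖z‖ = ‖x‖) : z ∈ Efund p m :=
  ⟨h ▸ hx.1, h ▸ hx.2⟩

theorem isCompact_Efund : IsCompact (Efund p m) :=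
  (isCompact_closedBall (0 : ℚ_[p]) 1).of_isClosed_subset
    ((isClosed_le continuous_const continuous_norm).inter
      (isClosed_le continuous_norm continuous_const))
    fun _ hx => mem_closedBall_zero_iff.mpr hx.2

theorem zpow_mul_norm_pos_of_mem_Efund (k : ℕ) (hz : z ∈ Efund p m) :
    0 < (p : ℝ) ^ (-(k : ℤ)) * ‖z‖ :=
  mul_pos (zpow_pos (Nat.cast_pos.mpr (Fact.out : p.Prime).pos) _) (norm_pos_of_mem_Efund hz)

theorem ball_subset_Efund (k : ℕ) (hz : z ∈ Efund p m) :
    Metric.ball z ((p : ℝ) ^ (-(k : ℤ)) * ‖z‖) ⊆ Efund p m := by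
  intro w hw
  refine mem_Efund_of_norm_eq hz (Padic.norm_eq_of_norm_sub_lt_right ?_)
  have hpk : (p : ℝ) ^ (-(k : ℤ)) ≤ 1 :=
    zpow_le_one_of_nonpos₀ (Nat.one_le_cast.mpr (Fact.out : p.Prime).one_lt.le) (by omega)
  exact (mem_ball_iff_norm.mp hw).trans_le (mul_le_of_le_one_left (norm_nonneg z) hpk)

end Efund

section Conductor

variable {m k : ℕ} {f g : ℚ_[p] → ℝ} {x z : ℚ_[p]}

theorem hasConductor_iff : HasConductor p m k f ↔
    ∀ z ∈ Efund p m, ∀ w, ‖w - z‖ ≤ (p : ℝ) ^ (-(k : ℤ)) * ‖z‖ → f w = f z := by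
  have hnorm (z v : ℚ_[p]) : ‖z * v - z‖ = ‖v - 1‖ * ‖z‖ := by
    rw [← mul_sub_one, norm_mul, mul_comm]
  constructor
  · intro hf z hz w hw
    have hz0 := ne_zero_of_mem_Efund hz
    have h := hf z hz (w / z) <| by
      rwa [← mul_le_mul_iff_left₀ (norm_pos_of_mem_Efund hz), ← hnorm, mul_div_cancel₀ _ hz0]
    rwa [mul_div_cancel₀ _ hz0] at h
  · intro hf z hz v hv
    exact hf z hz _ ((hnorm z v).trans_le (mul_le_mul_of_nonneg_right hv (norm_nonneg z)))

theorem HasConductor.sub (hf : HasConductor p m k f) (hg : HasConductor p m k g) :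
    HasConductor p m k (fun x => f x - g x) :=
  fun x hx u hu => by simp only [hf x hx u hu, hg x hx u hu]

theorem HasConductor.eventuallyEq_nhds (hf : HasConductor p m k f) (hz : z ∈ Efund p m) :
    f =ᶠ[𝓝 z] fun _ => f z := by
  filter_upwards [Metric.closedBall_mem_nhds z (zpow_mul_norm_pos_of_mem_Efund k hz)] with w hw
  exact hasConductor_iff.mp hf z hz w (mem_closedBall_iff_norm.mp hw)

theorem HasConductor.continuousOn (hf : HasConductor p m k f) : ContinuousOn f (Efund p m) :=
  fun _ hz => (hf.eventuallyEq_nhds hz).continuousAt.continuousWithinAt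

theorem HasConductor.continuousOn_div_norm_sub_sq (hf : HasConductor p m k f)
    (hx : x ∈ Efund p m) :
    ContinuousOn (fun z => (f z - f x) / ‖z - x‖ ^ 2) (Efund p m) := by
  intro z hz
  rcases eq_or_ne z x with rfl | hzx
  · refine (Filter.EventuallyEq.continuousAt (y := 0) ?_).continuousWithinAt
    filter_upwards [hf.eventuallyEq_nhds hz] with w hw
    rw [hw, sub_self, zero_div]
  · exact ((hf.continuousOn z hz).sub continuousWithinAt_const).div
      ((continuous_norm.comp (continuous_sub_right x)).pow 2).continuousWithinAt
      (pow_ne_zero 2 (norm_ne_zero_iff.mpr (sub_ne_zero.mpr hzx)))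

variable [MeasurableSpace ℚ_[p]] [BorelSpace ℚ_[p]] (μ : Measure ℚ_[p])

theorem HasConductor.integrableOn_div_norm_sub_sq [IsFiniteMeasureOnCompacts μ]
    (hf : HasConductor p m k f) (hx : x ∈ Efund p m) :
    IntegrableOn (fun z => (f z - f x) / ‖z - x‖ ^ 2) (Efund p m) μ :=
  (hf.continuousOn_div_norm_sub_sq hx).integrableOn_compact isCompact_Efund

end Conductor

section MaximumPrinciple

variable {m k : ℕ} [MeasurableSpace ℚ_[p]] (μ : Measure ℚ_[p]) {f g : ℚ_[p] → ℝ} {x x₀ : ℚ_[p]}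

theorem Dop_sub (hf : IntegrableOn (fun z => (f z - f x) / ‖z - x‖ ^ 2) (Efund p m) μ)
    (hg : IntegrableOn (fun z => (g z - g x) / ‖z - x‖ ^ 2) (Efund p m) μ) :
    Dop p m μ (fun z => f z - g z) x = Dop p m μ f x - Dop p m μ g x := by
  rw [Dop, Dop, Dop, ← mul_sub, ← integral_sub hf hg]
  congr 2 with z
  ring

variable [BorelSpace ℚ_[p]]

theorem ae_eq_of_isMaxOn_of_Dop_eq_zero (hx₀ : x₀ ∈ Efund p m)
    (hmax : IsMaxOn f (Efund p m) x₀)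
    (hint : IntegrableOn (fun z => (f z - f x₀) / ‖z - x₀‖ ^ 2) (Efund p m) μ)
    (hD : Dop p m μ f x₀ = 0) :
    ∀ᵐ z ∂μ.restrict (Efund p m), f z = f x₀ := by
  have hnonneg : 0 ≤ᵐ[μ.restrict (Efund p m)] fun z => -((f z - f x₀) / ‖z - x₀‖ ^ 2) := by
    filter_upwards [ae_restrict_mem isCompact_Efund.measurableSet] with z hz
    exact neg_nonneg.mpr (div_nonpos_of_nonpos_of_nonneg (sub_nonpos.mpr (hmax hz)) (by positivity))
  have hzero : ∫ z in Efund p m, -((f z - f x₀) / ‖z - x₀‖ ^ 2) ∂μ = 0 := by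
    rw [integral_neg, neg_eq_zero]
    exact (mul_eq_zero.mp hD).resolve_left (norm_pos_of_mem_Efund hx₀).ne'
  filter_upwards [(integral_eq_zero_iff_of_nonneg_ae hnonneg hint.neg).mp hzero] with z hz
  rcases div_eq_zero_iff.mp (neg_eq_zero.mp hz) with h | h
  · exact sub_eq_zero.mp h
  · rw [sq_eq_zero_iff, norm_eq_zero, sub_eq_zero] at h
    rw [h]

theorem HasConductor.eq_of_ae_eq [μ.IsOpenPosMeasure] (hf : HasConductor p m k f) {c : ℝ}
    (h : ∀ᵐ z ∂μ.restrict (Efund p m), f z = c) (hx : x ∈ Efund p m) : f x = c := by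
  set r := (p : ℝ) ^ (-(k : ℤ)) * ‖x‖
  have hr : 0 < r := zpow_mul_norm_pos_of_mem_Efund k hx
  have : (ae (μ.restrict (Metric.ball x r))).NeBot :=
    ae_restrict_neBot.mpr (Metric.measure_ball_pos μ x hr).ne'
  obtain ⟨w, hw, hfw⟩ := ((ae_restrict_mem measurableSet_ball).and
    (ae_restrict_of_ae_restrict_of_subset (ball_subset_Efund k hx) h)).exists
  rw [← hfw]
  exact (hasConductor_iff.mp hf x hx w (mem_ball_iff_norm.mp hw).le).symm

theorem HasConductor.eq_of_Dop_eq_zero [IsFiniteMeasureOnCompacts μ] [μ.IsOpenPosMeasure]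
    (hf : HasConductor p m k f) (hD : ∀ x ∈ Efund p m, Dop p m μ f x = 0) {x y : ℚ_[p]}
    (hx : x ∈ Efund p m) (hy : y ∈ Efund p m) : f x = f y := by
  obtain ⟨x₀, hx₀, hmax⟩ := isCompact_Efund.exists_isMaxOn ⟨y, hy⟩ hf.continuousOn
  have hae := ae_eq_of_isMaxOn_of_Dop_eq_zero μ hx₀ hmax
    (hf.integrableOn_div_norm_sub_sq μ hx₀) (hD x₀ hx₀)
  rw [hf.eq_of_ae_eq μ hae hx, hf.eq_of_ae_eq μ hae hy]

end MaximumPrinciple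

section Homothety

variable {m : ℕ} {y u z : ℚ_[p]}

theorem norm_sub_one_lt_one_of_mul_norm_lt (hy : y ∈ Efund p m)
    (hu : ‖u - 1‖ * ‖y‖ < (p : ℝ) ^ (1 - (m : ℤ))) : ‖u - 1‖ < 1 :=
  lt_of_mul_lt_mul_right (by rw [one_mul]; exact hu.trans_le hy.1) (norm_nonneg y)

theorem norm_eq_one_of_mul_norm_lt (hy : y ∈ Efund p m)
    (hu : ‖u - 1‖ * ‖y‖ < (p : ℝ) ^ (1 - (m : ℤ))) : ‖u‖ = 1 := by
  simpa using Padic.norm_eq_of_norm_sub_lt_right (z2 := 1)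
    (by simpa using norm_sub_one_lt_one_of_mul_norm_lt hy hu)

theorem norm_homothety_of_mem_Efund (hy : y ∈ Efund p m)
    (hu : ‖u - 1‖ * ‖y‖ < (p : ℝ) ^ (1 - (m : ℤ))) (hz : z ∈ Efund p m) :
    ‖homothety y u z‖ = ‖z‖ := by
  refine Padic.norm_eq_of_norm_sub_lt_right ?_
  rw [← dist_eq_norm, dist_homothety_self, dist_eq_norm, norm_sub_rev 1 u]
  calc ‖u - 1‖ * ‖y - z‖ ≤ ‖u - 1‖ * max ‖y‖ ‖z‖ :=
        mul_le_mul_of_nonneg_left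
          (by simpa [sub_eq_add_neg] using IsUltrametricDist.norm_add_le_max y (-z))
          (norm_nonneg _)
    _ = max (‖u - 1‖ * ‖y‖) (‖u - 1‖ * ‖z‖) := mul_max_of_nonneg _ _ (norm_nonneg _)
    _ < ‖z‖ := max_lt (hu.trans_le hz.1) (mul_lt_of_lt_one_left (norm_pos_of_mem_Efund hz)
        (norm_sub_one_lt_one_of_mul_norm_lt hy hu))

theorem homothety_mem_Efund (hy : y ∈ Efund p m)
    (hu : ‖u - 1‖ * ‖y‖ < (p : ℝ) ^ (1 - (m : ℤ))) (hz : z ∈ Efund p m) :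
    homothety y u z ∈ Efund p m :=
  mem_Efund_of_norm_eq hz (norm_homothety_of_mem_Efund hy hu hz)

theorem preimage_homothety_Efund (hy : y ∈ Efund p m)
    (hu : ‖u - 1‖ * ‖y‖ < (p : ℝ) ^ (1 - (m : ℤ))) :
    homothety y u ⁻¹' Efund p m = Efund p m := by
  have hu1 := norm_eq_one_of_mul_norm_lt hy hu
  have hu0 : u ≠ 0 := norm_ne_zero_iff.mp (by rw [hu1]; exact one_ne_zero)
  have hu_inv : ‖u⁻¹ - 1‖ * ‖y‖ < (p : ℝ) ^ (1 - (m : ℤ)) := by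
    rwa [show u⁻¹ - 1 = (1 - u) * u⁻¹ by field_simp, norm_mul, norm_inv, hu1, inv_one, mul_one,
      norm_sub_rev]
  refine Set.Subset.antisymm (fun z hz => ?_) (fun z hz => homothety_mem_Efund hy hu hz)
  have h := homothety_mem_Efund hy hu_inv hz
  rwa [← AffineMap.homothety_mul_apply, inv_mul_cancel₀ hu0, AffineMap.homothety_one,
    AffineMap.id_apply] at h

theorem norm_homothety_div_sub_one (hu : ‖u‖ = 1) (y z : ℚ_[p]) :
    ‖homothety y u z / y - 1‖ = ‖z / y - 1‖ := by
  rcases eq_or_ne y 0 with rfl | hy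
  · simp
  rw [div_sub_one hy, div_sub_one hy, norm_div, norm_div, ← dist_eq_norm,
    dist_homothety_center, hu, one_mul, dist_comm, dist_eq_norm]

variable {k : ℕ} {f : ℚ_[p] → ℝ}

theorem HasConductor.comp_homothety (hy : y ∈ Efund p m)
    (hu : ‖u - 1‖ * ‖y‖ < (p : ℝ) ^ (1 - (m : ℤ))) (hf : HasConductor p m k f) :
    HasConductor p m k (f ∘ homothety y u) := by
  rw [hasConductor_iff] at hf ⊢
  intro z hz w hw
  refine hf _ (homothety_mem_Efund hy hu hz) _ ?_
  rwa [homothety_sub_homothety, norm_mul, norm_eq_one_of_mul_norm_lt hy hu, one_mul,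
    norm_homothety_of_mem_Efund hy hu hz]

theorem Dop_comp_homothety [MeasurableSpace ℚ_[p]] [BorelSpace ℚ_[p]] (μ : Measure ℚ_[p])
    [μ.IsAddHaarMeasure] (hy : y ∈ Efund p m)
    (hu : ‖u - 1‖ * ‖y‖ < (p : ℝ) ^ (1 - (m : ℤ))) (f : ℚ_[p] → ℝ) (hz : z ∈ Efund p m) :
    Dop p m μ (f ∘ homothety y u) z = Dop p m μ f (homothety y u z) := by
  have hu1 := norm_eq_one_of_mul_norm_lt hy hu
  have hdist (t : ℚ_[p]) : ‖homothety y u t - homothety y u z‖ = ‖t - z‖ := by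
    rw [homothety_sub_homothety, norm_mul, hu1, one_mul]
  have hσ := (Padic.measurePreserving_homothety μ hu1 y).setIntegral_preimage_emb
    (isometry_homothety hu1 y).isClosedEmbedding.measurableEmbedding
    (fun w => (f w - f (homothety y u z)) / ‖w - homothety y u z‖ ^ 2) (Efund p m)
  rw [preimage_homothety_Efund hy hu] at hσ
  simp only [Dop, Function.comp_apply, norm_homothety_of_mem_Efund hy hu hz, ← hσ, hdist]

end Homothety

theorem green_digit_dependence_general (p m : ℕ) [Fact p.Prime]
    [MeasurableSpace ℚ_[p]] [BorelSpace ℚ_[p]]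
    (μ : Measure ℚ_[p]) [μ.IsAddHaarMeasure]
    (k : ℕ) (G : ℚ_[p] → ℚ_[p] → ℝ)
    (hG : IsGreen p m μ k G)
    (y : ℚ_[p]) (hy : y ∈ Efund p m)
    (u : ℚ_[p]) (hu : ‖u - 1‖ ≤ (p : ℝ) ^ (-((m : ℤ) - y.valuation)))
    (x : ℚ_[p]) (hx : x ∈ Efund p m) :
    y + u * (x - y) ∈ Efund p m ∧ G (y + u * (x - y)) y = G x y := by
  have hu' : ‖u - 1‖ * ‖y‖ < (p : ℝ) ^ (1 - (m : ℤ)) :=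
    (Padic.mul_norm_le_zpow_of_le_zpow_neg_sub_valuation (ne_zero_of_mem_Efund hy) hu).trans_lt
      (zpow_lt_zpow_right₀ (Nat.one_lt_cast.mpr (Fact.out : p.Prime).one_lt) (by omega))
  have hσ : y + u * (x - y) = homothety y u x := by
    simp [AffineMap.homothety_apply, add_comm]
  rw [hσ]
  refine ⟨homothety_mem_Efund hy hu' hx, ?_⟩
  have hB : HasConductor p m k (G · y) := hG.1 y hy
  have hA := hB.comp_homothety hy hu'
  have hD : ∀ z ∈ Efund p m, Dop p m μ (fun t => ((G · y) ∘ homothety y u) t - G t y) z = 0 := by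
    intro z hz
    rw [Dop_sub μ (hA.integrableOn_div_norm_sub_sq μ hz) (hB.integrableOn_div_norm_sub_sq μ hz),
      Dop_comp_homothety μ hy hu' _ hz, hG.2.2 _ (homothety_mem_Efund hy hu' hz) y hy,
      hG.2.2 z hz y hy, norm_homothety_div_sub_one (norm_eq_one_of_mul_norm_lt hy hu'), sub_self]
  simpa [AffineMap.homothety_apply_same, sub_eq_zero] using
    (hA.sub hB).eq_of_Dop_eq_zero μ hD hx hy

/-- For fixed `y ∈ E`, a symmetric Green's function depends on
`x − y` only up to its leading `m − v_p(y)` `p`-adic digits: if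
`u ∈ 1 + p^{m − v_p(y)} ℤ_p` and `x ∈ E`, then `x' := y + u(x − y)` lies in `E` and
`G(x', y) = G(x, y)`. -/
theorem green_digit_dependence (p m : ℕ) [Fact p.Prime] (hm : 1 ≤ m)
    [MeasurableSpace ℚ_[p]] [BorelSpace ℚ_[p]]
    (μ : Measure ℚ_[p]) [μ.IsAddHaarMeasure]
    (hμ : μ (Metric.closedBall 0 1) = 1)
    (k : ℕ) (hk : 1 ≤ k) (G : ℚ_[p] → ℚ_[p] → ℝ)
    (hG : IsGreen p m μ k G) (hGs : IsSymmG p m G)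
    (y : ℚ_[p]) (hy : y ∈ Efund p m)
    (u : ℚ_[p]) (hu : ‖u - 1‖ ≤ (p : ℝ) ^ (-((m : ℤ) - y.valuation)))
    (x : ℚ_[p]) (hx : x ∈ Efund p m) :
    y + u * (x - y) ∈ Efund p m ∧ G (y + u * (x - y)) y = G x y :=
  green_digit_dependence_general p m μ k G hG y hy u hu x hx
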